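/- arXiv:0710.3681 — 2 statements merged into one kernel-verified Lean document; each statement's English description precedes it below -/
import Mathlib

section
/- For real numbers a > b ≥ c > d > 0 with ad - bc < 0, the function g(x) = ln((a^x - b^x)/(c^x - d^x)), extended continuously at 0, is strictly concave on the real line. -/
noncomputable def logMean (x y : ℝ) : ℝ := (x - y) / (Real.log x - Real.log y)

/-!
Write `a ^ x - b ^ x = 2 exp (M x) sinh (p x)` with `p = (log a - log b) / 2` and
`M = (log a + log b) / 2`, and likewise `c ^ x - d ^ x` with `q = (log c - log d) / 2`. The function
is then a linear function plus `E x = log (sinh (p x) / sinh (q x))`, and `ad < bc` says exactly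
that `0 < p < q`. On `(0, ∞)`, monotonicity of `t coth t` makes `E' = p coth (p x) - q coth (q x)`
negative, and monotonicity of `sinh t / t` makes `E'' = (q / sinh (q x))² - (p / sinh (p x))²`
negative. Since `E` is even, `E (s x + t y) = E |s x + t y| ≥ E (s |x| + t |y|)`, which reduces
strict concavity on `ℝ` to strict concavity on `[0, ∞)`.
-/

open Real Set Filter Topology

lemma strictConvexOn_sinh_Ici : StrictConvexOn ℝ (Ici 0) sinh :=
  StrictMonoOn.strictConvexOn_of_deriv (convex_Ici 0) continuous_sinh.continuousOn <| by
    rw [Real.deriv_sinh, interior_Ici]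
    exact cosh_strictMonoOn.mono Ioi_subset_Ici_self

lemma strictMonoOn_sinh_div_self : StrictMonoOn (fun t => sinh t / t) (Ioi 0) := by
  intro u (hu : 0 < u) v (hv : 0 < v) huv
  simpa using strictConvexOn_sinh_Ici.secant_strict_mono self_mem_Ici (mem_Ici.2 hu.le)
    (mem_Ici.2 hv.le) hu.ne' hv.ne' huv

lemma strictMonoOn_mul_cosh_div_sinh : StrictMonoOn (fun t => t * cosh t / sinh t) (Ioi 0) := by
  intro u (hu : 0 < u) v (hv : 0 < v) huv
  -- expanding `sinh (v - u) / (v - u) < sinh (v + u) / (v + u)` gives the claim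
  have key := strictMonoOn_sinh_div_self (sub_pos.2 huv) (show 0 < v + u by linarith)
    (by linarith : v - u < v + u)
  rw [div_lt_div_iff₀ (by linarith) (by linarith), sinh_sub, sinh_add] at key
  rw [div_lt_div_iff₀ (sinh_pos_iff.2 hu) (sinh_pos_iff.2 hv)]
  nlinarith

lemma hasDerivAt_log_sinh_mul (r : ℝ) {x : ℝ} (hx : r * x ≠ 0) :
    HasDerivAt (fun t => log (sinh (r * t))) (r * (cosh (r * x) / sinh (r * x))) x := by
  convert ((hasDerivAt_id' x).const_mul r).sinh.log (sinh_ne_zero.2 hx) using 1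
  simp only [mul_one]
  ring

lemma hasDerivAt_mul_cosh_div_sinh_mul (r : ℝ) {x : ℝ} (hx : r * x ≠ 0) :
    HasDerivAt (fun t => r * (cosh (r * t) / sinh (r * t))) (-(r / sinh (r * x)) ^ 2) x := by
  have hr := (hasDerivAt_id' x).const_mul r
  refine ((hr.cosh.fun_div hr.sinh (sinh_ne_zero.2 hx)).const_mul r).congr_deriv ?_
  field_simp [sinh_ne_zero.2 hx]
  linear_combination (-r ^ 2) * cosh_sq_sub_sinh_sq (r * x)

theorem Function.Even.strictConcaveOn_univ {E : ℝ → ℝ} (heven : Function.Even E)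
    (hconc : StrictConcaveOn ℝ (Ici 0) E) (hanti : StrictAntiOn E (Ici 0)) :
    StrictConcaveOn ℝ univ E := by
  have habs (x : ℝ) : E |x| = E x := by
    rcases abs_choice x with h | h <;> rw [h]
    exact heven x
  refine ⟨convex_univ, fun x _ y _ hxy s t hs ht hst => ?_⟩
  simp only [smul_eq_mul]
  rw [← habs x, ← habs y, ← habs (s * x + t * y)]
  by_cases hxy' : |x| = |y|
  · obtain rfl : x = -y := (abs_eq_abs.1 hxy').resolve_left hxy
    have hy : y ≠ 0 := fun h => hxy (by simp [h])
    have hlt : |s * -y + t * y| < |y| := by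
      rw [show s * -y + t * y = (t - s) * y by ring, abs_mul]
      exact mul_lt_of_lt_one_left (abs_pos.2 hy) (abs_lt.2 ⟨by linarith, by linarith⟩)
    rw [hxy', ← add_mul, hst, one_mul]
    exact hanti (mem_Ici.2 (abs_nonneg _)) (mem_Ici.2 (abs_nonneg _)) hlt
  · have htri : |s * x + t * y| ≤ s * |x| + t * |y| := by
      calc |s * x + t * y| ≤ |s * x| + |t * y| := abs_add_le _ _
        _ = s * |x| + t * |y| := by rw [abs_mul, abs_mul, abs_of_pos hs, abs_of_pos ht]
    calc s * E |x| + t * E |y| < E (s * |x| + t * |y|) := by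
          simpa using hconc.2 (abs_nonneg x) (abs_nonneg y) hxy' hs ht hst
      _ ≤ E |s * x + t * y| :=
          hanti.antitoneOn (mem_Ici.2 (abs_nonneg _)) (mem_Ici.2 (by positivity)) htri

lemma tendsto_sinh_mul_div_sinh_mul (p : ℝ) {q : ℝ} (hq : q ≠ 0) :
    Tendsto (fun x => sinh (p * x) / sinh (q * x)) (𝓝[≠] 0) (𝓝 (p / q)) := by
  have hslope (r : ℝ) : Tendsto (fun x => sinh (r * x) / x) (𝓝[≠] 0) (𝓝 r) := by
    simpa [slope_fun_def_field] using
      hasDerivAt_iff_tendsto_slope.1 ((hasDerivAt_id' 0).const_mul r).sinh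
  refine ((hslope p).div (hslope q) hq).congr' ?_
  filter_upwards [self_mem_nhdsWithin] with x hx
  exact div_div_div_cancel_right₀ hx _ _

noncomputable def logSinhRatio (p q x : ℝ) : ℝ :=
  if x = 0 then log (p / q) else log (sinh (p * x) / sinh (q * x))

section logSinhRatio

variable {p q : ℝ}

lemma even_logSinhRatio : Function.Even (logSinhRatio p q) := by
  intro x
  simp only [logSinhRatio, neg_eq_zero, mul_neg, sinh_neg, neg_div_neg_eq]

lemma continuous_logSinhRatio (hp : p ≠ 0) (hq : q ≠ 0) : Continuous (logSinhRatio p q) := by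
  have hupdate : logSinhRatio p q =
      Function.update (fun x => log (sinh (p * x) / sinh (q * x))) 0 (log (p / q)) := by
    ext x
    simp only [logSinhRatio, Function.update_apply]
  refine continuous_iff_continuousAt.2 fun x => ?_
  rw [hupdate]
  rcases eq_or_ne x 0 with rfl | hx
  · exact continuousAt_update_same.2
      ((tendsto_sinh_mul_div_sinh_mul p hq).log (div_ne_zero hp hq))
  · have hp' : sinh (p * x) ≠ 0 := sinh_ne_zero.2 (mul_ne_zero hp hx)
    have hq' : sinh (q * x) ≠ 0 := sinh_ne_zero.2 (mul_ne_zero hq hx)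
    rw [continuousAt_update_of_ne hx]
    exact ((by fun_prop : ContinuousAt (fun x => sinh (p * x)) x).div (by fun_prop) hq').log
      (div_ne_zero hp' hq')

lemma logSinhRatio_eqOn_Ioi (hp : 0 < p) (hq : 0 < q) :
    EqOn (logSinhRatio p q) (fun x => log (sinh (p * x)) - log (sinh (q * x))) (Ioi 0) := by
  intro x (hx : 0 < x)
  rw [logSinhRatio, if_neg hx.ne', log_div (sinh_pos_iff.2 (by positivity)).ne'
    (sinh_pos_iff.2 (by positivity)).ne']

lemma hasDerivAt_logSinhRatio (hp : 0 < p) (hq : 0 < q) {x : ℝ} (hx : 0 < x) :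
    HasDerivAt (logSinhRatio p q)
      (p * (cosh (p * x) / sinh (p * x)) - q * (cosh (q * x) / sinh (q * x))) x :=
  ((hasDerivAt_log_sinh_mul p (by positivity)).sub
    (hasDerivAt_log_sinh_mul q (by positivity))).congr_of_eventuallyEq
    ((logSinhRatio_eqOn_Ioi hp hq).eventuallyEq_of_mem (Ioi_mem_nhds hx))

lemma strictAntiOn_deriv_logSinhRatio (hp : 0 < p) (hpq : p < q) :
    StrictAntiOn (deriv (logSinhRatio p q)) (Ioi 0) := by
  have hq := hp.trans hpq
  let ψ x := p * (cosh (p * x) / sinh (p * x)) - q * (cosh (q * x) / sinh (q * x))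
  have hψ {x : ℝ} (hx : 0 < x) :
      HasDerivAt ψ (-(p / sinh (p * x)) ^ 2 - -(q / sinh (q * x)) ^ 2) x :=
    (hasDerivAt_mul_cosh_div_sinh_mul p (by positivity)).sub
      (hasDerivAt_mul_cosh_div_sinh_mul q (by positivity))
  have hψ_anti : StrictAntiOn ψ (Ioi 0) := by
    refine strictAntiOn_of_deriv_neg (convex_Ioi 0)
      (fun x hx => (hψ hx).continuousAt.continuousWithinAt) fun x hx => ?_
    rw [interior_Ioi] at hx
    have hx : 0 < x := hx
    have hsp : 0 < sinh (p * x) := sinh_pos_iff.2 (by positivity)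
    have hsq : 0 < sinh (q * x) := sinh_pos_iff.2 (by positivity)
    have hslope := strictMonoOn_sinh_div_self (mul_pos hp hx) (mul_pos hq hx)
      (mul_lt_mul_of_pos_right hpq hx)
    rw [div_lt_div_iff₀ (by positivity) (by positivity)] at hslope
    have : q / sinh (q * x) < p / sinh (p * x) := by
      rw [div_lt_div_iff₀ hsq hsp]
      nlinarith
    rw [(hψ hx).deriv]
    nlinarith [div_pos hq hsq]
  exact hψ_anti.congr fun x hx => (hasDerivAt_logSinhRatio hp hq hx).deriv.symm

lemma strictAntiOn_logSinhRatio_Ici (hp : 0 < p) (hpq : p < q) :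
    StrictAntiOn (logSinhRatio p q) (Ici 0) := by
  have hq := hp.trans hpq
  refine strictAntiOn_of_deriv_neg (convex_Ici 0)
    (continuous_logSinhRatio hp.ne' hq.ne').continuousOn fun x hx => ?_
  rw [interior_Ici] at hx
  have hx : 0 < x := hx
  have hcoth : p * x * cosh (p * x) / sinh (p * x) < q * x * cosh (q * x) / sinh (q * x) :=
    strictMonoOn_mul_cosh_div_sinh (mul_pos hp hx) (mul_pos hq hx)
      (mul_lt_mul_of_pos_right hpq hx)
  have : x * (p * (cosh (p * x) / sinh (p * x))) < x * (q * (cosh (q * x) / sinh (q * x))) := by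
    convert hcoth using 1 <;> ring
  rw [(hasDerivAt_logSinhRatio hp hq hx).deriv, sub_neg]
  exact lt_of_mul_lt_mul_left this hx.le

lemma strictConcaveOn_logSinhRatio_Ici (hp : 0 < p) (hpq : p < q) :
    StrictConcaveOn ℝ (Ici 0) (logSinhRatio p q) :=
  StrictAntiOn.strictConcaveOn_of_deriv (convex_Ici 0)
    (continuous_logSinhRatio hp.ne' (hp.trans hpq).ne').continuousOn
    (by rw [interior_Ici]; exact strictAntiOn_deriv_logSinhRatio hp hpq)

theorem strictConcaveOn_logSinhRatio (hp : 0 < p) (hpq : p < q) :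
    StrictConcaveOn ℝ univ (logSinhRatio p q) :=
  even_logSinhRatio.strictConcaveOn_univ (strictConcaveOn_logSinhRatio_Ici hp hpq)
    (strictAntiOn_logSinhRatio_Ici hp hpq)

end logSinhRatio

lemma rpow_sub_rpow_eq {a b : ℝ} (ha : 0 < a) (hb : 0 < b) (x : ℝ) :
    a ^ x - b ^ x = 2 * exp ((log a + log b) / 2 * x) * sinh ((log a - log b) / 2 * x) := by
  rw [rpow_def_of_pos ha, rpow_def_of_pos hb, sinh_eq, mul_right_comm,
    mul_div_cancel₀ _ two_ne_zero, sub_mul, ← exp_add, ← exp_add]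
  ring_nf

lemma log_rpow_sub_rpow_div_rpow_sub_rpow {a b c d : ℝ} (hb : 0 < b) (hab : b < a) (hd : 0 < d)
    (hcd : d < c) {x : ℝ} (hx : x ≠ 0) :
    log ((a ^ x - b ^ x) / (c ^ x - d ^ x)) =
      logSinhRatio ((log a - log b) / 2) ((log c - log d) / 2) x +
        ((log a + log b) / 2 - (log c + log d) / 2) * x := by
  have hsinh {u v : ℝ} (hv : 0 < v) (huv : v < u) : sinh ((log u - log v) / 2 * x) ≠ 0 :=
    sinh_ne_zero.2 (mul_ne_zero (by linarith [log_lt_log hv huv]) hx)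
  have hsab := hsinh hb hab
  have hscd := hsinh hd hcd
  rw [rpow_sub_rpow_eq (hb.trans hab) hb, rpow_sub_rpow_eq (hd.trans hcd) hd, logSinhRatio,
    if_neg hx, mul_div_mul_comm, mul_div_mul_comm, div_self two_ne_zero, one_mul,
    ← exp_sub, log_mul (exp_ne_zero _) (div_ne_zero hsab hscd), log_exp]
  ring

lemma div_mul_logMean_div_logMean {a b c d : ℝ} (hb : 0 < b) (hab : b < a) (hd : 0 < d)
    (hcd : d < c) :
    (a - b) / (c - d) * (logMean c d / logMean a b) =
      (log a - log b) / 2 / ((log c - log d) / 2) := by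
  have hlab : log a - log b ≠ 0 := by linarith [log_lt_log hb hab]
  have hlcd : log c - log d ≠ 0 := by linarith [log_lt_log hd hcd]
  have : a - b ≠ 0 := by linarith
  have : c - d ≠ 0 := by linarith
  unfold logMean
  field_simp

theorem stmt2_general (a b c d : ℝ) (hab : a > b) (hcd : c > d) (hd : d > 0)
    (h : a * d - b * c < 0) :
    StrictConcaveOn ℝ Set.univ (fun x : ℝ =>
      if x = 0 then Real.log (((a - b) / (c - d)) * (logMean c d / logMean a b))
      else Real.log ((a ^ x - b ^ x) / (c ^ x - d ^ x))) := by
  have hc : 0 < c := hd.trans hcd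
  have ha : 0 < a := by nlinarith
  have hb : 0 < b := by nlinarith
  have hp : 0 < log a - log b := sub_pos.2 (log_lt_log hb hab)
  have hpq : log a - log b < log c - log d := by
    have := log_lt_log (by positivity) (by linarith : a * d < b * c)
    rw [log_mul ha.ne' hd.ne', log_mul hb.ne' hc.ne'] at this
    linarith
  have hg : (fun x : ℝ =>
      if x = 0 then Real.log (((a - b) / (c - d)) * (logMean c d / logMean a b))
      else Real.log ((a ^ x - b ^ x) / (c ^ x - d ^ x))) = fun x =>
        logSinhRatio ((log a - log b) / 2) ((log c - log d) / 2) x +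
          ((log a + log b) / 2 - (log c + log d) / 2) * x := by
    funext x
    split_ifs with hx
    · rw [hx, logSinhRatio, if_pos rfl, mul_zero, add_zero,
        div_mul_logMean_div_logMean hb hab hd hcd]
    · exact log_rpow_sub_rpow_div_rpow_sub_rpow hb hab hd hcd hx
  rw [hg]
  exact (strictConcaveOn_logSinhRatio (by linarith) (by linarith)).add_concaveOn
    ((LinearMap.mul ℝ ℝ _).concaveOn convex_univ)

theorem stmt2 (a b c d : ℝ) (hab : a > b) (hbc : b ≥ c) (hcd : c > d) (hd : d > 0)
    (h : a * d - b * c < 0) :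
    StrictConcaveOn ℝ Set.univ (fun x : ℝ =>
      if x = 0 then Real.log (((a - b) / (c - d)) * (logMean c d / logMean a b))
      else Real.log ((a ^ x - b ^ x) / (c ^ x - d ^ x))) :=
  stmt2_general a b c d hab hcd hd h
end

section
/- For real x > 1, (x^2 - 1)·ln x < 4x·(1 - x + x·ln x). -/
/-
Rearranged, the inequality says `4x(x - 1) < (3x² + 1) log x`. This follows from the classical
bound `log x > 2(x - 1)/(x + 1)`, because `(3x² + 1) · 2(x - 1) - 4x(x - 1)(x + 1) = 2(x - 1)³ ≥ 0`.
-/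

open Real

lemma two_mul_sub_one_div_add_one_lt_log {x : ℝ} (hx : 1 < x) :
    2 * (x - 1) / (x + 1) < log x := by
  have h := lt_log_one_add_of_pos (sub_pos.2 hx)
  rwa [add_sub_cancel, sub_add_eq_add_sub, add_sub_assoc, show (2 : ℝ) - 1 = 1 by norm_num]
    at h

lemma four_mul_mul_sub_one_lt_mul_log {x : ℝ} (hx : 1 < x) :
    4 * x * (x - 1) < (3 * x ^ 2 + 1) * log x := by
  have hx1 : 0 < x + 1 := by linarith
  have hlog := (div_lt_iff₀ hx1).1 (two_mul_sub_one_div_add_one_lt_log hx)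
  have hcube : 0 ≤ 2 * (x - 1) ^ 3 := by
    have : 0 ≤ x - 1 := by linarith
    positivity
  refine lt_of_mul_lt_mul_right ?_ hx1.le
  calc 4 * x * (x - 1) * (x + 1) = (3 * x ^ 2 + 1) * (2 * (x - 1)) - 2 * (x - 1) ^ 3 := by ring
    _ ≤ (3 * x ^ 2 + 1) * (2 * (x - 1)) := by linarith
    _ < (3 * x ^ 2 + 1) * (log x * (x + 1)) := by gcongr
    _ = (3 * x ^ 2 + 1) * log x * (x + 1) := by ring

theorem stmt16 (x : ℝ) (hx : x > 1) :
    (x ^ 2 - 1) * Real.log x < 4 * x * (1 - x + x * Real.log x) := by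
  linarith [four_mul_mul_sub_one_lt_mul_log hx]
end
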